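/- arXiv:2303.16321 — 2 statements merged into one kernel-verified Lean document; each statement's English description precedes it below -/
import Mathlib

section
/- For every strategy g, every finite horizon T ∈ ℕ, every t = 0, …, T and every realization m_t of the memory: γ^{T+1}·c^min/(1−γ) + J_t^g(m_t; T) ≤ V_t^g(m_t) ≤ J_t^g(m_t; T) + γ^{T+1}·c^max/(1−γ). -/
open Set Filter

noncomputable section

/-- Hausdorff distance built from an arbitrary distance function `η`,
`ℋ(A,B) = max{sup_{a∈A} inf_{b∈B} η a b, sup_{b∈B} inf_{a∈A} η a b}`. -/
def hausd {α : Type*} (η : α → α → ℝ) (A B : Set α) : ℝ :=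
  max (sSup ((fun a => sInf ((fun b => η a b) '' B)) '' A))
      (sSup ((fun b => sInf ((fun a => η a b) '' A)) '' B))

/-- The time-invariant DP operator `𝒯` for general information states:
`[𝒯Λ](s,z) = inf_u sup_{c,s'} (c + γ·Λ(s',γz) + ρ(c,s'|s,u)/z)`, the sup being over the
support of the cost distribution `ρ` (off the support `ρ = −∞`). -/
def DPop {Ss Uu : Type*} (γ : ℝ) (ρ : ℝ → Ss → Ss → Uu → EReal)
    (Λ : Ss → ℝ → ℝ) (s : Ss) (z : ℝ) : ℝ :=
  sInf (Set.range fun u : Uu => sSup ((fun p : ℝ × Ss =>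
    p.1 + γ * Λ p.2 (γ * z) + (ρ p.1 p.2 s u).toReal / z) '' {p | ρ p.1 p.2 s u ≠ ⊥}))

/-- Iterates `Λ^n = 𝒯^n Λ^0` starting from `Λ^0 ≡ 0`. -/
def DPopIter {Ss Uu : Type*} (γ : ℝ) (ρ : ℝ → Ss → Ss → Uu → EReal) : ℕ → Ss → ℝ → ℝ
  | 0 => fun _ _ => 0
  | (n+1) => DPop γ ρ (DPopIter γ ρ n)

/-- The law-dependent operator `𝒯(π)`. -/
def DPopLaw {Ss Uu : Type*} (γ : ℝ) (ρ : ℝ → Ss → Ss → Uu → EReal) (π : Ss → ℝ → Uu)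
    (Λ : Ss → ℝ → ℝ) (s : Ss) (z : ℝ) : ℝ :=
  sSup ((fun p : ℝ × Ss =>
    p.1 + γ * Λ p.2 (γ * z) + (ρ p.1 p.2 s (π s z)).toReal / z) '' {p | ρ p.1 p.2 s (π s z) ≠ ⊥})

/-- Iterates `𝒯(π)^n Λ^0` starting from `Λ^0 ≡ 0`. -/
def DPopLawIter {Ss Uu : Type*} (γ : ℝ) (ρ : ℝ → Ss → Ss → Uu → EReal) (π : Ss → ℝ → Uu) :
    ℕ → Ss → ℝ → ℝ
  | 0 => fun _ _ => 0
  | (n+1) => DPopLaw γ ρ π (DPopLawIter γ ρ π n)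

/-- The time-invariant DP operator `𝒯̄` for problems with observable costs:
`[𝒯̄Λ̄](s̄) = inf_u sup_{(c,s̄') ∈ F(s̄,u)} (c + γ·Λ̄(s̄'))` where `F s̄ u = [[C, S̄' | s̄, u]]`. -/
def DPopB {Sb Uu : Type*} (γ : ℝ) (F : Sb → Uu → Set (ℝ × Sb)) (Λ : Sb → ℝ) (s : Sb) : ℝ :=
  sInf (Set.range fun u : Uu => sSup ((fun p : ℝ × Sb => p.1 + γ * Λ p.2) '' F s u))

/-- Iterates `Λ̄^n = 𝒯̄^n Λ̄^0` starting from `Λ̄^0 ≡ 0`. -/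
def DPopBIter {Sb Uu : Type*} (γ : ℝ) (F : Sb → Uu → Set (ℝ × Sb)) : ℕ → Sb → ℝ
  | 0 => fun _ => 0
  | (n+1) => DPopB γ F (DPopBIter γ F n)

/-- The law-dependent observable-cost operator. -/
def DPopBLaw {Sb Uu : Type*} (γ : ℝ) (F : Sb → Uu → Set (ℝ × Sb)) (π : Sb → Uu)
    (Λ : Sb → ℝ) (s : Sb) : ℝ :=
  sSup ((fun p : ℝ × Sb => p.1 + γ * Λ p.2) '' F s (π s))

/-- `β_t(T)` error coefficients, fuel-indexed: `beta γ e k t = β_t(t+k)` with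
`β_T(T) = γ^T·e` and `β_t(T) = β_{t+1}(T) + γ^t·e`. -/
def beta (γ e : ℝ) : ℕ → ℕ → ℝ
  | 0, t => γ ^ t * e
  | (k+1), t => beta γ e k (t+1) + γ ^ t * e

/-- A partially observed non-stochastic input–output system with bounded costs:
disturbances `W_t ∈ 𝒲`, actions `U_t ∈ 𝒰`, observations `Y_0 = h_0(W_0)`,
`Y_{t+1} = h_{t+1}(W_{0:t}, U_{0:t})`, and costs `C_t = d_t(W_{0:t}, U_{0:t}) ∈ 𝒞 ⊆ [cmin, cmax] ⊂ ℝ≥0`,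
with a discount factor `γ ∈ (0,1)`. -/
structure Sys where
  W : Type
  U : Type
  Y : Type
  [hW : Nonempty W]
  [hU : Nonempty U]
  [hY : Nonempty Y]
  γ : ℝ
  cmin : ℝ
  cmax : ℝ
  h0 : W → Y
  h : (t : ℕ) → (Fin (t+1) → W) → (Fin (t+1) → U) → Y
  d : (t : ℕ) → (Fin (t+1) → W) → (Fin (t+1) → U) → ℝ
  hγ0 : 0 < γ
  hγ1 : γ < 1
  hcmin : 0 ≤ cmin
  hcost : ∀ t ω υ, d t ω υ ∈ Set.Icc cmin cmax

attribute [instance] Sys.hW Sys.hU Sys.hY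

namespace Sys

variable (S : Sys)

/-- `a^max = c^max/(1-γ)`. -/
def amax : ℝ := S.cmax / (1 - S.γ)

/-- Memory space at time `t`: `M_t = (Y_{0:t}, U_{0:t-1})`. -/
abbrev Mem (t : ℕ) : Type := (Fin (t+1) → S.Y) × (Fin t → S.U)

/-- Control strategies `g = (g_0, g_1, …)`, `U_t = g_t(M_t)`. -/
abbrev Strat : Type := (t : ℕ) → S.Mem t → S.U

/-- The memory realization at time `0` generated by an initial observation `y_0`. -/
def mem0 (y : S.Y) : S.Mem 0 := (fun _ => y, Fin.elim0)

/-- Open-loop observation `Y_s` generated by disturbances `ω` and actions `u_{0:s-1}`. -/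
def oy (ω : ℕ → S.W) : (s : ℕ) → (Fin s → S.U) → S.Y
  | 0, _ => S.h0 (ω 0)
  | (t+1), υ => S.h t (fun i : Fin (t+1) => ω i) υ

/-- Open-loop cost `C_t` generated by disturbances `ω` and actions `u_{0:t}`. -/
def oc (ω : ℕ → S.W) (t : ℕ) (υ : Fin (t+1) → S.U) : ℝ :=
  S.d t (fun i : Fin (t+1) => ω i) υ

/-- Open-loop accrued cost `A_t = Σ_{ℓ<t} γ^ℓ C_ℓ`. -/
def oA (ω : ℕ → S.W) (t : ℕ) (υ : Fin t → S.U) : ℝ :=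
  ∑ ℓ : Fin t, S.γ ^ (ℓ : ℕ) *
    S.oc ω ℓ (fun j : Fin ((ℓ : ℕ) + 1) => υ ⟨j, by have := j.isLt; have := ℓ.isLt; omega⟩)

/-- Open-loop memory at time `t` generated by disturbances `ω` and actions `u_{0:t-1}`. -/
def omem (ω : ℕ → S.W) (t : ℕ) (υ : Fin t → S.U) : S.Mem t :=
  (fun i : Fin (t+1) =>
    S.oy ω i (fun j : Fin (i : ℕ) => υ ⟨j, by have := j.isLt; have := i.isLt; omega⟩), υ)

/-- Disturbance realizations consistent with the memory realization `m_t`. -/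
def consistent (t : ℕ) (m : S.Mem t) : Set (ℕ → S.W) := {ω | S.omem ω t m.2 = m}

/-- `[[A_t | m_t]]`, the conditional range of the accrued cost. -/
def Arange (t : ℕ) (m : S.Mem t) : Set ℝ :=
  (fun ω => S.oA ω t m.2) '' S.consistent t m

/-- Closed-loop memory `M_t` generated by strategy `g` and disturbances `ω`. -/
def memOf (g : S.Strat) (ω : ℕ → S.W) : (t : ℕ) → S.Mem t
  | 0 => (fun _ => S.h0 (ω 0), Fin.elim0)
  | (t+1) =>
    let m := memOf g ω t
    let us : Fin (t+1) → S.U := Fin.snoc m.2 (g t m)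
    (Fin.snoc m.1 (S.h t (fun i : Fin (t+1) => ω i) us), us)

/-- Closed-loop action `U_t = g_t(M_t)`. -/
def act (g : S.Strat) (ω : ℕ → S.W) (t : ℕ) : S.U := g t (S.memOf g ω t)

/-- Closed-loop cost `C_t`. -/
def ccost (g : S.Strat) (ω : ℕ → S.W) (t : ℕ) : ℝ :=
  S.d t (fun i : Fin (t+1) => ω i) (fun i : Fin (t+1) => S.act g ω i)

/-- Closed-loop accrued cost `A_t = Σ_{ℓ<t} γ^ℓ C_ℓ`. -/
def cA (g : S.Strat) (ω : ℕ → S.W) (t : ℕ) : ℝ :=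
  ∑ ℓ ∈ Finset.range t, S.γ ^ ℓ * S.ccost g ω ℓ

/-- Closed-loop cost-to-go `C_t^∞ = Σ_{ℓ≥t} γ^{ℓ-t} C_ℓ`. -/
def cCinf (g : S.Strat) (ω : ℕ → S.W) (t : ℕ) : ℝ :=
  ∑' k : ℕ, S.γ ^ k * S.ccost g ω (t + k)

/-- Strategy value function
`V_t^g(m_t) = sup_{(a,c^∞) ∈ [[A_t, C_t^∞ | m_t]]^g} (a + γ^t c^∞)`. -/
def V (g : S.Strat) (t : ℕ) (m : S.Mem t) : ℝ :=
  sSup ((fun ω => S.cA g ω t + S.γ ^ t * S.cCinf g ω t) '' {ω | S.memOf g ω t = m})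

/-- Optimal value function `V_t(m_t) = inf_g V_t^g(m_t)`
(the infimum over strategies consistent with the realization `m_t`). -/
def Vopt (t : ℕ) (m : S.Mem t) : ℝ :=
  sInf ((fun g => S.V g t m) '' {g : S.Strat | ∃ ω, S.memOf g ω t = m})

/-- Strategy-dependent finite-horizon function, fuel-indexed:
`Jg g n t m = J_t^g(m_t; t+n)` with `J_T^g(m_T;T) = sup_{[[A_T,C_T|m_T]]^g}(a_T + γ^T c_T)` and
`J_t^g(m_t;T) = sup_{m_{t+1} ∈ [[M_{t+1}|m_t]]^g} J_{t+1}^g(m_{t+1};T)`. -/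
def Jg (g : S.Strat) : ℕ → (t : ℕ) → S.Mem t → ℝ
  | 0, t, m => sSup ((fun ω => S.cA g ω t + S.γ ^ t * S.ccost g ω t) '' {ω | S.memOf g ω t = m})
  | (n+1), t, m =>
    sSup ((fun ω => Jg g n (t+1) (S.memOf g ω (t+1))) '' {ω | S.memOf g ω t = m})

/-- Optimal finite-horizon function, fuel-indexed: `Jopt n t m = J_t(m_t; t+n)` with
`J_T(m_T;T) = inf_{u_T} sup_{[[A_T,C_T|m_T,u_T]]}(a_T + γ^T c_T)` and
`J_t(m_t;T) = inf_{u_t} sup_{m_{t+1} ∈ [[M_{t+1}|m_t,u_t]]} J_{t+1}(m_{t+1};T)`. -/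
def Jopt : ℕ → (t : ℕ) → S.Mem t → ℝ
  | 0, t, m => sInf (Set.range fun u : S.U =>
      sSup ((fun ω => S.oA ω t m.2 + S.γ ^ t * S.oc ω t (Fin.snoc m.2 u)) '' S.consistent t m))
  | (n+1), t, m => sInf (Set.range fun u : S.U =>
      sSup ((fun ω => Jopt n (t+1) (S.omem ω (t+1) (Fin.snoc m.2 u))) '' S.consistent t m))

/-- The conditional accrued distribution `r_t((c,s) | m_t, u_t)` of the pair
`(C_t, S_{t+1})` where `S_{t+1} = σ_{t+1}(M_{t+1})`:
`r_t(x|y) = sup_{a ∈ [0,a^max]}(a + 𝕀(x,a|y)) − sup_{a ∈ [0,a^max]}(a + 𝕀(a|y))` in `ℝ ∪ {−∞}`. -/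
def rcs {Ss : Type*} (σ : (t : ℕ) → S.Mem t → Ss) (t : ℕ) (c : ℝ) (s : Ss)
    (m : S.Mem t) (u : S.U) : EReal :=
  sSup ((fun a : ℝ => (a : EReal)) '' {a | a ∈ Set.Icc 0 S.amax ∧ ∃ ω ∈ S.consistent t m,
      S.oc ω t (Fin.snoc m.2 u) = c ∧ σ (t+1) (S.omem ω (t+1) (Fin.snoc m.2 u)) = s ∧
      S.oA ω t m.2 = a}) -
  sSup ((fun a : ℝ => (a : EReal)) '' {a | a ∈ Set.Icc 0 S.amax ∧ ∃ ω ∈ S.consistent t m,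
      S.oA ω t m.2 = a})

/-! ### Observable costs -/

/-- Memory space with observable costs: `M_t = (Y_{0:t}, C_{0:t-1}, U_{0:t-1})`. -/
abbrev MemO (t : ℕ) : Type := (Fin (t+1) → S.Y) × (Fin t → ℝ) × (Fin t → S.U)

/-- Strategies for the observable-cost problem. -/
abbrev StratO : Type := (t : ℕ) → S.MemO t → S.U

/-- The observable-cost memory realization at time `0` from an initial observation. -/
def memO0 (y : S.Y) : S.MemO 0 := (fun _ => y, Fin.elim0, Fin.elim0)

/-- Open-loop observable-cost memory generated by `ω` and actions `u_{0:t-1}`. -/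
def omemO (ω : ℕ → S.W) (t : ℕ) (υ : Fin t → S.U) : S.MemO t :=
  (fun i : Fin (t+1) =>
      S.oy ω i (fun j : Fin (i : ℕ) => υ ⟨j, by have := j.isLt; have := i.isLt; omega⟩),
   fun ℓ : Fin t =>
      S.oc ω ℓ (fun j : Fin ((ℓ : ℕ) + 1) => υ ⟨j, by have := j.isLt; have := ℓ.isLt; omega⟩),
   υ)

/-- Disturbances consistent with an observable-cost memory realization. -/
def consistentO (t : ℕ) (m : S.MemO t) : Set (ℕ → S.W) := {ω | S.omemO ω t m.2.2 = m}

/-- `[[A_t | m_t]]` for the observable-cost problem. -/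
def ArangeO (t : ℕ) (m : S.MemO t) : Set ℝ :=
  (fun ω => S.oA ω t m.2.2) '' S.consistentO t m

/-- Closed-loop observable-cost memory. -/
def memOfO (g : S.StratO) (ω : ℕ → S.W) : (t : ℕ) → S.MemO t
  | 0 => (fun _ => S.h0 (ω 0), Fin.elim0, Fin.elim0)
  | (t+1) =>
    let m := memOfO g ω t
    let us : Fin (t+1) → S.U := Fin.snoc m.2.2 (g t m)
    (Fin.snoc m.1 (S.h t (fun i : Fin (t+1) => ω i) us),
     Fin.snoc m.2.1 (S.d t (fun i : Fin (t+1) => ω i) us), us)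

/-- Closed-loop action for the observable-cost problem. -/
def actO (g : S.StratO) (ω : ℕ → S.W) (t : ℕ) : S.U := g t (S.memOfO g ω t)

/-- Closed-loop cost for the observable-cost problem. -/
def ccostO (g : S.StratO) (ω : ℕ → S.W) (t : ℕ) : ℝ :=
  S.d t (fun i : Fin (t+1) => ω i) (fun i : Fin (t+1) => S.actO g ω i)

/-- Closed-loop accrued cost for the observable-cost problem. -/
def cAO (g : S.StratO) (ω : ℕ → S.W) (t : ℕ) : ℝ :=
  ∑ ℓ ∈ Finset.range t, S.γ ^ ℓ * S.ccostO g ω ℓ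

/-- Closed-loop cost-to-go for the observable-cost problem. -/
def cCinfO (g : S.StratO) (ω : ℕ → S.W) (t : ℕ) : ℝ :=
  ∑' k : ℕ, S.γ ^ k * S.ccostO g ω (t + k)

/-- Strategy value function for the observable-cost problem. -/
def VO (g : S.StratO) (t : ℕ) (m : S.MemO t) : ℝ :=
  sSup ((fun ω => S.cAO g ω t + S.γ ^ t * S.cCinfO g ω t) '' {ω | S.memOfO g ω t = m})

/-- Optimal value function for the observable-cost problem. -/
def VoptO (t : ℕ) (m : S.MemO t) : ℝ :=
  sInf ((fun g => S.VO g t m) '' {g : S.StratO | ∃ ω, S.memOfO g ω t = m})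

/-- Optimal finite-horizon function for the observable-cost problem, fuel-indexed. -/
def JoptO : ℕ → (t : ℕ) → S.MemO t → ℝ
  | 0, t, m => sInf (Set.range fun u : S.U =>
      sSup ((fun ω => S.oA ω t m.2.2 + S.γ ^ t * S.oc ω t (Fin.snoc m.2.2 u)) ''
        S.consistentO t m))
  | (n+1), t, m => sInf (Set.range fun u : S.U =>
      sSup ((fun ω => JoptO n (t+1) (S.omemO ω (t+1) (Fin.snoc m.2.2 u))) '' S.consistentO t m))

/-- `[[C_t, S̄_{t+1} | m_t, u_t]]`: conditional range of the current cost and next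
(information-) state `S̄_{t+1} = σ̄_{t+1}(M_{t+1})` given the memory `m_t` and action `u_t`. -/
def CSrange {Sb : Type*} (σ : (t : ℕ) → S.MemO t → Sb) (t : ℕ) (m : S.MemO t) (u : S.U) :
    Set (ℝ × Sb) :=
  (fun ω => (S.oc ω t (Fin.snoc m.2.2 u), σ (t+1) (S.omemO ω (t+1) (Fin.snoc m.2.2 u)))) ''
    S.consistentO t m

/-- `[[C_t, Y_{t+1} | m_t, u_t]]`. -/
def CYrange (t : ℕ) (m : S.MemO t) (u : S.U) : Set (ℝ × S.Y) :=
  (fun ω => (S.oc ω t (Fin.snoc m.2.2 u), S.oy ω (t+1) (Fin.snoc m.2.2 u))) '' S.consistentO t m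

open Classical in
/-- Conditional indicator `𝕀((c_t, m_{t+1}) | m_t, u_t)` for the observable-cost problem. -/
def indObs (t : ℕ) (c : ℝ) (m' : S.MemO (t+1)) (m : S.MemO t) (u : S.U) : EReal :=
  if ∃ ω ∈ S.consistentO t m,
      S.oc ω t (Fin.snoc m.2.2 u) = c ∧ S.omemO ω (t+1) (Fin.snoc m.2.2 u) = m' then 0 else ⊥

/-- Conditional accrued distribution `r_t((c_t, m_{t+1}) | m_t, u_t)` for the
observable-cost problem. -/
def rObs (t : ℕ) (c : ℝ) (m' : S.MemO (t+1)) (m : S.MemO t) (u : S.U) : EReal :=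
  sSup ((fun a : ℝ => (a : EReal)) '' {a | a ∈ Set.Icc 0 S.amax ∧ ∃ ω ∈ S.consistentO t m,
      S.oc ω t (Fin.snoc m.2.2 u) = c ∧ S.omemO ω (t+1) (Fin.snoc m.2.2 u) = m' ∧
      S.oA ω t m.2.2 = a}) -
  sSup ((fun a : ℝ => (a : EReal)) '' {a | a ∈ Set.Icc 0 S.amax ∧ ∃ ω ∈ S.consistentO t m,
      S.oA ω t m.2.2 = a})

end Sys


section Aux

variable (S : Sys) (g : S.Strat)

lemma cmax_nonneg : 0 ≤ S.cmax := by
  obtain ⟨w⟩ := S.hW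
  obtain ⟨u⟩ := S.hU
  have h := S.hcost 0 (fun _ => w) (fun _ => u)
  exact le_trans S.hcmin (le_trans h.1 h.2)

lemma ccost_mem (ω : ℕ → S.W) (t : ℕ) : S.ccost g ω t ∈ Set.Icc S.cmin S.cmax :=
  S.hcost _ _ _

lemma one_sub_pos : 0 < 1 - S.γ := by linarith [S.hγ1]

lemma summable_cc (ω : ℕ → S.W) (t : ℕ) :
    Summable (fun k => S.γ ^ k * S.ccost g ω (t + k)) := by
  apply Summable.of_nonneg_of_le
    (fun k => mul_nonneg (pow_nonneg S.hγ0.le _)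
      (le_trans S.hcmin (ccost_mem S g ω (t+k)).1))
    (fun k => mul_le_mul_of_nonneg_left (ccost_mem S g ω (t+k)).2 (pow_nonneg S.hγ0.le _))
  exact (summable_geometric_of_lt_one S.hγ0.le S.hγ1).mul_right _

lemma cCinf_le (ω : ℕ → S.W) (t : ℕ) : S.cCinf g ω t ≤ S.cmax / (1 - S.γ) := by
  have h1 : S.cCinf g ω t ≤ ∑' k : ℕ, S.γ ^ k * S.cmax := by
    apply Summable.tsum_le_tsum
      (fun k => mul_le_mul_of_nonneg_left (ccost_mem S g ω (t+k)).2 (pow_nonneg S.hγ0.le _))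
      (summable_cc S g ω t)
      ((summable_geometric_of_lt_one S.hγ0.le S.hγ1).mul_right _)
  rw [tsum_mul_right, tsum_geometric_of_lt_one S.hγ0.le S.hγ1] at h1
  calc S.cCinf g ω t ≤ (1 - S.γ)⁻¹ * S.cmax := h1
    _ = S.cmax / (1 - S.γ) := by ring

lemma le_cCinf (ω : ℕ → S.W) (t : ℕ) : S.cmin / (1 - S.γ) ≤ S.cCinf g ω t := by
  have h1 : (∑' k : ℕ, S.γ ^ k * S.cmin) ≤ S.cCinf g ω t := by
    apply Summable.tsum_le_tsum
      (fun k => mul_le_mul_of_nonneg_left (ccost_mem S g ω (t+k)).1 (pow_nonneg S.hγ0.le _))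
      ((summable_geometric_of_lt_one S.hγ0.le S.hγ1).mul_right _)
      (summable_cc S g ω t)
  rw [tsum_mul_right, tsum_geometric_of_lt_one S.hγ0.le S.hγ1] at h1
  calc S.cmin / (1 - S.γ) = (1 - S.γ)⁻¹ * S.cmin := by ring
    _ ≤ S.cCinf g ω t := h1

lemma cCinf_succ (ω : ℕ → S.W) (t : ℕ) :
    S.cCinf g ω t = S.ccost g ω t + S.γ * S.cCinf g ω (t+1) := by
  unfold Sys.cCinf
  rw [Summable.tsum_eq_zero_add (summable_cc S g ω t)]
  have : S.γ * ∑' k : ℕ, S.γ ^ k * S.ccost g ω (t + 1 + k)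
      = ∑' k : ℕ, S.γ ^ (k+1) * S.ccost g ω (t + (k + 1)) := by
    rw [← tsum_mul_left]
    congr 1; funext k
    have : t + 1 + k = t + (k + 1) := by omega
    rw [this]; ring
  rw [this]
  simp

lemma total_eq (ω : ℕ → S.W) (s : ℕ) :
    S.cA g ω s + S.γ ^ s * S.cCinf g ω s
      = S.cA g ω (s+1) + S.γ ^ (s+1) * S.cCinf g ω (s+1) := by
  have h1 : S.cA g ω (s+1) = S.cA g ω s + S.γ ^ s * S.ccost g ω s :=
    Finset.sum_range_succ _ _
  rw [h1, cCinf_succ S g ω s]; ring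

lemma total_eq' (ω : ℕ → S.W) (t n : ℕ) :
    S.cA g ω t + S.γ ^ t * S.cCinf g ω t
      = S.cA g ω (t+n) + S.γ ^ (t+n) * S.cCinf g ω (t+n) := by
  induction n with
  | zero => rfl
  | succ n ih => rw [ih, total_eq S g ω (t+n)]; rfl

lemma cA_le (ω : ℕ → S.W) (s : ℕ) : S.cA g ω s ≤ S.cmax / (1 - S.γ) := by
  have h1 : S.cA g ω s ≤ ∑ ℓ ∈ Finset.range s, S.γ ^ ℓ * S.cmax :=
    Finset.sum_le_sum fun ℓ _ =>
      mul_le_mul_of_nonneg_left (ccost_mem S g ω ℓ).2 (pow_nonneg S.hγ0.le _)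
  have h2 : (∑ ℓ ∈ Finset.range s, S.γ ^ ℓ * S.cmax) ≤ (1 - S.γ)⁻¹ * S.cmax := by
    rw [← Finset.sum_mul]
    apply mul_le_mul_of_nonneg_right _ (cmax_nonneg S)
    have := Summable.sum_le_tsum (Finset.range s)
      (fun i _ => pow_nonneg S.hγ0.le i)
      (summable_geometric_of_lt_one S.hγ0.le S.hγ1)
    rwa [tsum_geometric_of_lt_one S.hγ0.le S.hγ1] at this
  calc S.cA g ω s ≤ (1 - S.γ)⁻¹ * S.cmax := le_trans h1 h2
    _ = S.cmax / (1 - S.γ) := by ring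

lemma memOf_succ_inj (ω ω' : ℕ → S.W) (t : ℕ)
    (h : S.memOf g ω (t+1) = S.memOf g ω' (t+1)) : S.memOf g ω t = S.memOf g ω' t := by
  have h1 := congrArg Prod.fst h
  have h2 := congrArg Prod.snd h
  simp only [Sys.memOf] at h1 h2
  have e1 : (S.memOf g ω t).1 = (S.memOf g ω' t).1 := by
    have := congrArg Fin.init h1; simpa using this
  have e2 : (S.memOf g ω t).2 = (S.memOf g ω' t).2 := by
    have := congrArg Fin.init h2; simpa using this
  exact Prod.ext e1 e2

lemma Jg_eq (n : ℕ) : ∀ (t : ℕ) (m : S.Mem t),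
    S.Jg g n t m = sSup ((fun ω => S.cA g ω (t+n+1)) '' {ω | S.memOf g ω t = m}) := by
  induction n with
  | zero =>
    intro t m
    show sSup _ = _
    congr 1
    apply Set.image_congr
    intro ω _
    exact (Finset.sum_range_succ (fun ℓ => S.γ ^ ℓ * S.ccost g ω ℓ) t).symm
  | succ n ih =>
    intro t m
    show sSup ((fun ω => S.Jg g n (t+1) (S.memOf g ω (t+1))) '' {ω | S.memOf g ω t = m}) = _
    set B : Set (ℕ → S.W) := {ω | S.memOf g ω t = m} with hB
    set f : (ℕ → S.W) → ℝ := fun ω => S.cA g ω (t+(n+1)+1) with hf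
    rcases Set.eq_empty_or_nonempty B with hBe | hBne
    · rw [hBe, Set.image_empty, Set.image_empty]
    have key : ∀ ω, S.Jg g n (t+1) (S.memOf g ω (t+1))
        = sSup (f '' {ω' | S.memOf g ω' (t+1) = S.memOf g ω (t+1)}) := by
      intro ω
      rw [ih (t+1) (S.memOf g ω (t+1)), show t+1+n+1 = t+(n+1)+1 from by omega, hf]
    have hbddf : ∀ x ∈ f '' B, x ≤ S.cmax / (1 - S.γ) := by
      rintro x ⟨ω, _, rfl⟩; exact cA_le S g ω _
    have hbddB : BddAbove (f '' B) := ⟨_, fun x hx => hbddf x hx⟩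
    apply le_antisymm
    · apply csSup_le (hBne.image _)
      rintro x ⟨ω, hω, rfl⟩
      show S.Jg g n (t+1) (S.memOf g ω (t+1)) ≤ _
      rw [key ω]
      have hne2 : (f '' {ω' | S.memOf g ω' (t+1) = S.memOf g ω (t+1)}).Nonempty := ⟨f ω, ω, rfl, rfl⟩
      apply csSup_le hne2
      rintro y ⟨ω', hω', rfl⟩
      apply le_csSup hbddB
      refine Set.mem_image_of_mem f ?_
      show S.memOf g ω' t = m
      rw [memOf_succ_inj S g ω' ω t hω']
      exact hω
    · apply csSup_le (hBne.image _)
      rintro x ⟨ω, hω, rfl⟩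
      have h1 : f ω ≤ S.Jg g n (t+1) (S.memOf g ω (t+1)) := by
        rw [key ω]
        refine le_csSup ⟨S.cmax / (1 - S.γ), ?_⟩ (⟨ω, rfl, rfl⟩ :
          f ω ∈ f '' {ω' | S.memOf g ω' (t+1) = S.memOf g ω (t+1)})
        rintro y ⟨ω', _, rfl⟩; exact cA_le S g ω' _
      refine le_trans h1 (le_csSup ?_ (Set.mem_image_of_mem _ hω))
      refine ⟨S.cmax / (1 - S.γ), ?_⟩
      rintro y ⟨ω', hω', rfl⟩
      show S.Jg g n (t+1) (S.memOf g ω' (t+1)) ≤ _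
      rw [key ω']
      have hne3 : (f '' {ω'' | S.memOf g ω'' (t+1) = S.memOf g ω' (t+1)}).Nonempty :=
        ⟨f ω', ω', rfl, rfl⟩
      apply csSup_le hne3
      rintro z ⟨ω'', _, rfl⟩; exact cA_le S g ω'' _

end Aux
theorem stmt1 (S : Sys) (g : S.Strat) (T t : ℕ) (ht : t ≤ T) (m : S.Mem t)
    (hm : ∃ ω, S.memOf g ω t = m) :
    S.γ ^ (T+1) * S.cmin / (1 - S.γ) + S.Jg g (T - t) t m ≤ S.V g t m ∧
      S.V g t m ≤ S.Jg g (T - t) t m + S.γ ^ (T+1) * S.cmax / (1 - S.γ) := by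
  obtain ⟨ω0, hω0⟩ := hm
  have hT1 : t + (T - t) + 1 = T + 1 := by omega
  set B : Set (ℕ → S.W) := {ω | S.memOf g ω t = m} with hB
  have hBne : B.Nonempty := ⟨ω0, hω0⟩
  set f : (ℕ → S.W) → ℝ := fun ω => S.cA g ω (T+1) with hf
  set h : (ℕ → S.W) → ℝ := fun ω => S.γ ^ (T+1) * S.cCinf g ω (T+1) with hh
  have hJ : S.Jg g (T - t) t m = sSup (f '' B) := by
    rw [Jg_eq S g (T - t) t m, hT1]
  have hV : S.V g t m = sSup ((fun ω => f ω + h ω) '' B) := by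
    unfold Sys.V
    congr 1
    apply Set.image_congr
    intro ω _
    have := total_eq' S g ω t (T + 1 - t)
    rw [show t + (T + 1 - t) = T + 1 from by omega] at this
    exact this
  have hpow : (0:ℝ) ≤ S.γ ^ (T+1) := pow_nonneg S.hγ0.le _
  have hlo : ∀ ω, S.γ ^ (T+1) * S.cmin / (1 - S.γ) ≤ h ω := by
    intro ω
    have := le_cCinf S g ω (T+1)
    calc S.γ ^ (T+1) * S.cmin / (1 - S.γ) = S.γ ^ (T+1) * (S.cmin / (1 - S.γ)) := by ring
      _ ≤ h ω := mul_le_mul_of_nonneg_left this hpow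
  have hhi : ∀ ω, h ω ≤ S.γ ^ (T+1) * S.cmax / (1 - S.γ) := by
    intro ω
    have := cCinf_le S g ω (T+1)
    calc h ω ≤ S.γ ^ (T+1) * (S.cmax / (1 - S.γ)) := mul_le_mul_of_nonneg_left this hpow
      _ = S.γ ^ (T+1) * S.cmax / (1 - S.γ) := by ring
  have hbddf : BddAbove (f '' B) := by
    refine ⟨S.cmax / (1 - S.γ), ?_⟩
    rintro x ⟨ω, _, rfl⟩; exact cA_le S g ω _
  have hbddfh : BddAbove ((fun ω => f ω + h ω) '' B) := by
    refine ⟨S.cmax / (1 - S.γ) + S.γ ^ (T+1) * S.cmax / (1 - S.γ), ?_⟩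
    rintro x ⟨ω, _, rfl⟩
    exact add_le_add (cA_le S g ω _) (hhi ω)
  constructor
  · rw [hJ, hV]
    have h1 : sSup (f '' B) ≤ sSup ((fun ω => f ω + h ω) '' B)
        - S.γ ^ (T+1) * S.cmin / (1 - S.γ) := by
      apply csSup_le (hBne.image _)
      rintro x ⟨ω, hω, rfl⟩
      have h2 : f ω + h ω ≤ sSup ((fun ω => f ω + h ω) '' B) :=
        le_csSup hbddfh (Set.mem_image_of_mem _ hω)
      have := hlo ω
      linarith
    linarith
  · rw [hJ, hV]
    apply csSup_le (hBne.image _)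
    rintro x ⟨ω, hω, rfl⟩
    have h2 : f ω ≤ sSup (f '' B) := le_csSup hbddf (Set.mem_image_of_mem _ hω)
    have := hhi ω
    linarith
end
end

section
/- For every finite horizon T ∈ ℕ, every t = 0, …, T and every realization m_t of the memory: γ^{T+1}·c^min/(1−γ) + J_t(m_t; T) ≤ V_t(m_t) ≤ J_t(m_t; T) + γ^{T+1}·c^max/(1−γ), where V_t(m_t) = inf_{g ∈ 𝒢} V_t^g(m_t) is the optimal value function. -/
open Set Filter

noncomputable section

namespace Sys

variable (S : Sys)

lemma one_sub_pos : 0 < 1 - S.γ := by linarith [S.hγ1]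

lemma cmin_le_cmax : S.cmin ≤ S.cmax := by
  have h := S.hcost 0 (fun _ => Classical.arbitrary S.W) (fun _ => Classical.arbitrary S.U)
  exact le_trans h.1 h.2

lemma cmax_nonneg : 0 ≤ S.cmax := le_trans S.hcmin S.cmin_le_cmax

/-- Uniform upper bound for all the value quantities. -/
def Bd : ℝ := S.cmax * (1 - S.γ)⁻¹

lemma Bd_nonneg : 0 ≤ S.Bd :=
  mul_nonneg S.cmax_nonneg (inv_nonneg.2 (by linarith [S.one_sub_pos]))

lemma ccost_le (g : S.Strat) (ω : ℕ → S.W) (n : ℕ) : S.ccost g ω n ≤ S.cmax :=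
  (S.hcost n _ _).2

lemma ccost_ge (g : S.Strat) (ω : ℕ → S.W) (n : ℕ) : S.cmin ≤ S.ccost g ω n :=
  (S.hcost n _ _).1

lemma ccost_nonneg (g : S.Strat) (ω : ℕ → S.W) (n : ℕ) : 0 ≤ S.ccost g ω n :=
  le_trans S.hcmin (S.ccost_ge g ω n)

lemma oc_le (ω : ℕ → S.W) (n : ℕ) (υ : Fin (n+1) → S.U) : S.oc ω n υ ≤ S.cmax :=
  (S.hcost n _ _).2

lemma oc_nonneg (ω : ℕ → S.W) (n : ℕ) (υ : Fin (n+1) → S.U) : 0 ≤ S.oc ω n υ :=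
  le_trans S.hcmin (S.hcost n _ _).1

lemma summable_cc (g : S.Strat) (ω : ℕ → S.W) (t : ℕ) :
    Summable (fun k : ℕ => S.γ ^ k * S.ccost g ω (t+k)) := by
  refine Summable.of_nonneg_of_le
    (fun k => mul_nonneg (pow_nonneg S.hγ0.le k) (S.ccost_nonneg g ω (t+k)))
    (fun k => mul_le_mul_of_nonneg_left (S.ccost_le g ω (t+k)) (pow_nonneg S.hγ0.le k))
    ((summable_geometric_of_lt_one S.hγ0.le S.hγ1).mul_right S.cmax)

lemma cCinf_le (g : S.Strat) (ω : ℕ → S.W) (t : ℕ) : S.cCinf g ω t ≤ S.Bd := by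
  have h1 : S.cCinf g ω t ≤ ∑' k : ℕ, S.γ ^ k * S.cmax :=
    Summable.tsum_le_tsum
      (fun k => mul_le_mul_of_nonneg_left (S.ccost_le g ω (t+k)) (pow_nonneg S.hγ0.le k))
      (S.summable_cc g ω t)
      ((summable_geometric_of_lt_one S.hγ0.le S.hγ1).mul_right S.cmax)
  calc S.cCinf g ω t ≤ ∑' k : ℕ, S.γ ^ k * S.cmax := h1
    _ = (∑' k : ℕ, S.γ ^ k) * S.cmax := tsum_mul_right
    _ = (1 - S.γ)⁻¹ * S.cmax := by rw [tsum_geometric_of_lt_one S.hγ0.le S.hγ1]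
    _ = S.Bd := mul_comm _ _

lemma cCinf_ge (g : S.Strat) (ω : ℕ → S.W) (t : ℕ) :
    S.cmin * (1 - S.γ)⁻¹ ≤ S.cCinf g ω t := by
  have h1 : ∑' k : ℕ, S.γ ^ k * S.cmin ≤ S.cCinf g ω t :=
    Summable.tsum_le_tsum
      (fun k => mul_le_mul_of_nonneg_left (S.ccost_ge g ω (t+k)) (pow_nonneg S.hγ0.le k))
      ((summable_geometric_of_lt_one S.hγ0.le S.hγ1).mul_right S.cmin)
      (S.summable_cc g ω t)
  calc S.cmin * (1 - S.γ)⁻¹ = (1 - S.γ)⁻¹ * S.cmin := mul_comm _ _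
    _ = (∑' k : ℕ, S.γ ^ k) * S.cmin := by rw [tsum_geometric_of_lt_one S.hγ0.le S.hγ1]
    _ = ∑' k : ℕ, S.γ ^ k * S.cmin := tsum_mul_right.symm
    _ ≤ S.cCinf g ω t := h1

lemma cCinf_nonneg (g : S.Strat) (ω : ℕ → S.W) (t : ℕ) : 0 ≤ S.cCinf g ω t :=
  le_trans (mul_nonneg S.hcmin (inv_nonneg.2 (by linarith [S.one_sub_pos]))) (S.cCinf_ge g ω t)

/-- Total discounted cost from time `t`, seen from time `0`. -/
def Phi (g : S.Strat) (ω : ℕ → S.W) (t : ℕ) : ℝ :=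
  S.cA g ω t + S.γ ^ t * S.cCinf g ω t

lemma cA_succ (g : S.Strat) (ω : ℕ → S.W) (t : ℕ) :
    S.cA g ω (t+1) = S.cA g ω t + S.γ ^ t * S.ccost g ω t :=
  Finset.sum_range_succ _ t

lemma cA_nonneg (g : S.Strat) (ω : ℕ → S.W) (t : ℕ) : 0 ≤ S.cA g ω t :=
  Finset.sum_nonneg fun i _ => mul_nonneg (pow_nonneg S.hγ0.le i) (S.ccost_nonneg g ω i)

lemma phi_succ (g : S.Strat) (ω : ℕ → S.W) (t : ℕ) :
    S.Phi g ω (t+1) = S.Phi g ω t := by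
  have h1 : S.cCinf g ω t = S.ccost g ω t + S.γ * S.cCinf g ω (t+1) := by
    rw [Sys.cCinf, Summable.tsum_eq_zero_add (S.summable_cc g ω t)]
    congr 1
    · simp
    · rw [show S.cCinf g ω (t+1) = ∑' k : ℕ, S.γ ^ k * S.ccost g ω (t+1+k) from rfl,
        ← tsum_mul_left]
      apply tsum_congr
      intro k
      rw [show t + (k+1) = t+1+k by omega, pow_succ]
      ring
  rw [Sys.Phi, Sys.Phi, S.cA_succ g ω t, h1, pow_succ]
  ring

lemma phi_shift (g : S.Strat) (ω : ℕ → S.W) (t k : ℕ) :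
    S.Phi g ω (t+k) = S.Phi g ω t := by
  induction k with
  | zero => rfl
  | succ k ih => rw [show t+(k+1) = (t+k)+1 by omega, S.phi_succ g ω (t+k), ih]

lemma phi_eq_cCinf_zero (g : S.Strat) (ω : ℕ → S.W) (t : ℕ) :
    S.Phi g ω t = S.cCinf g ω 0 := by
  have := S.phi_shift g ω 0 t
  simp only [Nat.zero_add] at this
  rw [this, Sys.Phi]
  simp [Sys.cA]

lemma phi_le_Bd (g : S.Strat) (ω : ℕ → S.W) (t : ℕ) : S.Phi g ω t ≤ S.Bd := by
  rw [S.phi_eq_cCinf_zero]; exact S.cCinf_le g ω 0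

lemma phi_nonneg (g : S.Strat) (ω : ℕ → S.W) (t : ℕ) : 0 ≤ S.Phi g ω t := by
  rw [S.phi_eq_cCinf_zero]; exact S.cCinf_nonneg g ω 0

lemma base_le_Bd (g : S.Strat) (ω : ℕ → S.W) (t : ℕ) :
    S.cA g ω t + S.γ ^ t * S.ccost g ω t ≤ S.Bd := by
  have h1 : S.cA g ω t + S.γ ^ t * S.ccost g ω t ≤ S.Phi g ω (t+1) := by
    rw [Sys.Phi, S.cA_succ g ω t]
    have := mul_nonneg (pow_nonneg S.hγ0.le (t+1)) (S.cCinf_nonneg g ω (t+1))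
    linarith
  exact le_trans h1 (S.phi_le_Bd g ω (t+1))

lemma base_nonneg (g : S.Strat) (ω : ℕ → S.W) (t : ℕ) :
    0 ≤ S.cA g ω t + S.γ ^ t * S.ccost g ω t :=
  add_nonneg (S.cA_nonneg g ω t)
    (mul_nonneg (pow_nonneg S.hγ0.le t) (S.ccost_nonneg g ω t))

end Sys

namespace Sys

variable (S : Sys)

lemma memOf_fst_cs (g : S.Strat) (ω : ℕ → S.W) (t : ℕ) (j : Fin (t+1)) :
    (S.memOf g ω (t+1)).1 j.castSucc = (S.memOf g ω t).1 j := by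
  simp [Sys.memOf]

lemma memOf_snd_cs (g : S.Strat) (ω : ℕ → S.W) (t : ℕ) (j : Fin t) :
    (S.memOf g ω (t+1)).2 j.castSucc = (S.memOf g ω t).2 j := by
  simp [Sys.memOf]

lemma memOf_fst_last (g : S.Strat) (ω : ℕ → S.W) (t : ℕ) :
    (S.memOf g ω (t+1)).1 (Fin.last (t+1)) =
      S.h t (fun i : Fin (t+1) => ω i) (S.memOf g ω (t+1)).2 := by
  simp [Sys.memOf]

lemma memOf_snd_last (g : S.Strat) (ω : ℕ → S.W) (t : ℕ) :
    (S.memOf g ω (t+1)).2 (Fin.last t) = g t (S.memOf g ω t) := by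
  simp [Sys.memOf]

end Sys

namespace Sys

variable (S : Sys)

/-- Truncation of a memory realization to an earlier time. -/
def mpre {s t : ℕ} (h : s ≤ t) (m : S.Mem t) : S.Mem s :=
  (fun i => m.1 (Fin.castLE (by omega) i), fun i => m.2 (Fin.castLE (by omega) i))

lemma mpre_self {t : ℕ} (m : S.Mem t) : S.mpre le_rfl m = m := by
  rw [Sys.mpre]
  exact Prod.ext (funext fun i => congrArg m.1 (Fin.ext rfl))
    (funext fun i => congrArg m.2 (Fin.ext rfl))

lemma mpre_memOf (g : S.Strat) (ω : ℕ → S.W) :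
    ∀ {s t : ℕ} (h : s ≤ t), S.mpre h (S.memOf g ω t) = S.memOf g ω s := by
  intro s t
  induction t with
  | zero =>
    intro h
    obtain rfl : s = 0 := by omega
    exact S.mpre_self _
  | succ t ih =>
    intro h
    rcases Nat.lt_or_ge s (t+1) with hs | hs
    · have hst : s ≤ t := by omega
      rw [← ih hst]
      refine Prod.ext (funext fun i => ?_) (funext fun i => ?_)
      · show (S.memOf g ω (t+1)).1 (Fin.castLE (by omega) i) =
          (S.memOf g ω t).1 (Fin.castLE (by omega) i)
        rw [show (Fin.castLE (by omega : s+1 ≤ t+2) i) =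
          Fin.castSucc (Fin.castLE (by omega : s+1 ≤ t+1) i) from Fin.ext rfl,
          S.memOf_fst_cs]
      · show (S.memOf g ω (t+1)).2 (Fin.castLE (by omega) i) =
          (S.memOf g ω t).2 (Fin.castLE (by omega) i)
        rw [show (Fin.castLE (by omega : s ≤ t+1) i) =
          Fin.castSucc (Fin.castLE (by omega : s ≤ t) i) from Fin.ext rfl,
          S.memOf_snd_cs]
    · obtain rfl : s = t+1 := by omega
      exact S.mpre_self _

lemma memOf_eq_omem (g : S.Strat) (ω : ℕ → S.W) :
    ∀ t, S.memOf g ω t = S.omem ω t (fun i : Fin t => S.act g ω i) := by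
  intro t
  induction t with
  | zero =>
    refine Prod.ext (funext fun i => ?_) (funext fun i => i.elim0)
    refine Fin.cases ?_ (fun j => j.elim0) i
    rfl
  | succ t ih =>
    have hA : (S.memOf g ω (t+1)).2 = (fun i : Fin (t+1) => S.act g ω i) := by
      funext i
      refine Fin.lastCases ?_ (fun j => ?_) i
      · rw [S.memOf_snd_last]
        rfl
      · rw [S.memOf_snd_cs, congrFun (congrArg Prod.snd ih) j]
        rfl
    refine Prod.ext (funext fun i => ?_) hA
    refine Fin.lastCases ?_ (fun j => ?_) i
    · rw [S.memOf_fst_last, hA]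
      rfl
    · rw [S.memOf_fst_cs, congrFun (congrArg Prod.fst ih) j]
      rfl

lemma act_eq_of_memOf {g : S.Strat} {ω : ℕ → S.W} {t : ℕ} {m : S.Mem t}
    (h : S.memOf g ω t = m) (i : Fin t) : S.act g ω i = m.2 i := by
  have h2 := congrArg Prod.snd ((S.memOf_eq_omem g ω t).symm.trans h)
  exact congrFun h2 i

lemma consistent_of_memOf {g : S.Strat} {ω : ℕ → S.W} {t : ℕ} {m : S.Mem t}
    (h : S.memOf g ω t = m) : ω ∈ S.consistent t m := by
  have h2 : (fun i : Fin t => S.act g ω i) = m.2 := funext (S.act_eq_of_memOf h)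
  show S.omem ω t m.2 = m
  rw [← h2, ← S.memOf_eq_omem]
  exact h

end Sys

namespace Sys

variable (S : Sys)

lemma follow {g : S.Strat} {t : ℕ} {m : S.Mem t}
    (hg : ∀ s (hs : s < t), g s (S.mpre hs.le m) = m.2 ⟨s, hs⟩)
    {ω : ℕ → S.W} (hω : ω ∈ S.consistent t m) : S.memOf g ω t = m := by
  have hω' : S.omem ω t m.2 = m := hω
  suffices H : ∀ s (hs : s ≤ t), S.memOf g ω s = S.mpre hs m by
    have h2 := H t le_rfl
    rwa [S.mpre_self] at h2
  intro s
  induction s with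
  | zero =>
    intro hs
    refine Prod.ext (funext fun i => ?_) (funext fun i => i.elim0)
    refine Fin.cases ?_ (fun j => j.elim0) i
    exact congrFun (congrArg Prod.fst hω') (Fin.castLE (by omega) (0 : Fin 1))
  | succ s ih =>
    intro hs
    have hs' : s ≤ t := by omega
    have ihs := ih hs'
    have hact : g s (S.memOf g ω s) = m.2 ⟨s, by omega⟩ := by
      rw [ihs]
      exact hg s (by omega)
    have h2 : (S.memOf g ω (s+1)).2 = (S.mpre hs m).2 := by
      funext i
      refine Fin.lastCases ?_ (fun j => ?_) i
      · rw [S.memOf_snd_last]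
        exact hact
      · rw [S.memOf_snd_cs, ihs]
        rfl
    refine Prod.ext (funext fun i => ?_) h2
    refine Fin.lastCases ?_ (fun j => ?_) i
    · rw [S.memOf_fst_last, h2]
      exact congrFun (congrArg Prod.fst hω') ⟨s+1, by omega⟩
    · rw [S.memOf_fst_cs, ihs]
      rfl

lemma consistent_eq {g : S.Strat} {t : ℕ} {m : S.Mem t}
    (hw : ∃ ω₀, S.memOf g ω₀ t = m) :
    {ω | S.memOf g ω t = m} = S.consistent t m := by
  obtain ⟨ω₀, h₀⟩ := hw
  ext ω
  constructor
  · exact fun h => S.consistent_of_memOf h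
  · intro hω
    refine S.follow (fun s hs => ?_) hω
    rw [← h₀, S.mpre_memOf g ω₀ hs.le]
    exact S.act_eq_of_memOf rfl ⟨s, hs⟩

lemma acts_snoc {g : S.Strat} {ω : ℕ → S.W} {t : ℕ} {m : S.Mem t}
    (h : S.memOf g ω t = m) :
    (fun i : Fin (t+1) => S.act g ω i) = Fin.snoc m.2 (g t m) := by
  funext i
  refine Fin.lastCases ?_ (fun j => ?_) i
  · rw [Fin.snoc_last]
    show g t (S.memOf g ω t) = g t m
    rw [h]
  · rw [Fin.snoc_castSucc]
    exact S.act_eq_of_memOf h j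

lemma memOf_succ_omem {g : S.Strat} {ω : ℕ → S.W} {t : ℕ} {m : S.Mem t}
    (h : S.memOf g ω t = m) :
    S.memOf g ω (t+1) = S.omem ω (t+1) (Fin.snoc m.2 (g t m)) := by
  rw [S.memOf_eq_omem g ω (t+1), S.acts_snoc h]

lemma ccost_eq_oc {g : S.Strat} {ω : ℕ → S.W} {t : ℕ} {m : S.Mem t}
    (h : S.memOf g ω t = m) :
    S.ccost g ω t = S.oc ω t (Fin.snoc m.2 (g t m)) := by
  show S.d t _ (fun i : Fin (t+1) => S.act g ω i) = S.d t _ _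
  rw [S.acts_snoc h]

lemma ccost_eq_oc' {g : S.Strat} {ω : ℕ → S.W} {t : ℕ} {m : S.Mem t}
    (h : S.memOf g ω t = m) (ℓ : Fin t) :
    S.ccost g ω ℓ = S.oc ω ℓ (fun j : Fin ((ℓ : ℕ)+1) =>
      m.2 ⟨j, by have := j.isLt; have := ℓ.isLt; omega⟩) := by
  show S.d _ _ _ = S.d _ _ _
  congr 1
  funext i
  exact S.act_eq_of_memOf h ⟨i, by have := i.isLt; have := ℓ.isLt; omega⟩

lemma cA_eq_oA {g : S.Strat} {ω : ℕ → S.W} {t : ℕ} {m : S.Mem t}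
    (h : S.memOf g ω t = m) :
    S.cA g ω t = S.oA ω t m.2 := by
  rw [Sys.cA, Sys.oA, ← Fin.sum_univ_eq_sum_range (fun ℓ => S.γ^ℓ * S.ccost g ω ℓ) t]
  refine Finset.sum_congr rfl (fun ℓ _ => ?_)
  rw [S.ccost_eq_oc' h ℓ]

end Sys

namespace Sys

variable (S : Sys)

/-- The function being minimized in the `Jopt` recursion. -/
def JF : ℕ → (t : ℕ) → S.Mem t → S.U → ℝ
  | 0, t, m, u => sSup ((fun ω => S.oA ω t m.2 + S.γ ^ t * S.oc ω t (Fin.snoc m.2 u)) ''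
      S.consistent t m)
  | (n+1), t, m, u => sSup ((fun ω => S.Jopt n (t+1) (S.omem ω (t+1) (Fin.snoc m.2 u))) ''
      S.consistent t m)

lemma Jopt_eq_sInf_JF : ∀ (n t : ℕ) (m : S.Mem t),
    S.Jopt n t m = sInf (Set.range (S.JF n t m)) := by
  intro n
  cases n <;> (intros; rfl)

lemma oA_nonneg (ω : ℕ → S.W) (t : ℕ) (υ : Fin t → S.U) : 0 ≤ S.oA ω t υ :=
  Finset.sum_nonneg fun i _ =>
    mul_nonneg (pow_nonneg S.hγ0.le _) (le_trans S.hcmin (S.hcost _ _ _).1)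

lemma geom_sum_le (n : ℕ) : ∑ i ∈ Finset.range n, S.γ ^ i ≤ (1 - S.γ)⁻¹ := by
  have h := Summable.sum_le_tsum (Finset.range n) (fun i _ => pow_nonneg S.hγ0.le i)
    (summable_geometric_of_lt_one S.hγ0.le S.hγ1)
  rwa [tsum_geometric_of_lt_one S.hγ0.le S.hγ1] at h

lemma oA_oc_le (ω : ℕ → S.W) (t : ℕ) (υ : Fin t → S.U) (υ' : Fin (t+1) → S.U) :
    S.oA ω t υ + S.γ ^ t * S.oc ω t υ' ≤ S.Bd := by
  have h1 : S.oA ω t υ ≤ ∑ ℓ ∈ Finset.range t, S.γ ^ ℓ * S.cmax := by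
    rw [Sys.oA, ← Fin.sum_univ_eq_sum_range (fun ℓ => S.γ ^ ℓ * S.cmax) t]
    refine Finset.sum_le_sum (fun ℓ _ => ?_)
    exact mul_le_mul_of_nonneg_left (S.hcost _ _ _).2 (pow_nonneg S.hγ0.le _)
  have h2 : S.γ ^ t * S.oc ω t υ' ≤ S.γ ^ t * S.cmax :=
    mul_le_mul_of_nonneg_left (S.oc_le ω t υ') (pow_nonneg S.hγ0.le _)
  have h3 : ∑ ℓ ∈ Finset.range t, S.γ ^ ℓ * S.cmax + S.γ ^ t * S.cmax ≤ S.Bd := by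
    rw [← Finset.sum_range_succ (fun ℓ => S.γ ^ ℓ * S.cmax) t, ← Finset.sum_mul,
      Sys.Bd, mul_comm]
    exact mul_le_mul_of_nonneg_left (S.geom_sum_le (t+1)) S.cmax_nonneg
  linarith

lemma Jopt_nonneg : ∀ (n t : ℕ) (m : S.Mem t), 0 ≤ S.Jopt n t m := by
  intro n
  induction n with
  | zero =>
    intro t m
    refine le_csInf (Set.range_nonempty _) ?_
    rintro b ⟨u, rfl⟩
    refine Real.sSup_nonneg ?_
    rintro x ⟨ω, _, rfl⟩
    exact add_nonneg (S.oA_nonneg ω t m.2)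
      (mul_nonneg (pow_nonneg S.hγ0.le t) (S.oc_nonneg ω t _))
  | succ n ih =>
    intro t m
    refine le_csInf (Set.range_nonempty _) ?_
    rintro b ⟨u, rfl⟩
    refine Real.sSup_nonneg ?_
    rintro x ⟨ω, _, rfl⟩
    exact ih (t+1) _

lemma JF_nonneg (n t : ℕ) (m : S.Mem t) (u : S.U) : 0 ≤ S.JF n t m u := by
  cases n with
  | zero =>
    refine Real.sSup_nonneg ?_
    rintro x ⟨ω, _, rfl⟩
    exact add_nonneg (S.oA_nonneg ω t m.2)
      (mul_nonneg (pow_nonneg S.hγ0.le t) (S.oc_nonneg ω t _))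
  | succ n =>
    refine Real.sSup_nonneg ?_
    rintro x ⟨ω, _, rfl⟩
    exact S.Jopt_nonneg n (t+1) _

lemma bddBelow_JF (n t : ℕ) (m : S.Mem t) : BddBelow (Set.range (S.JF n t m)) := by
  refine ⟨0, ?_⟩
  rintro x ⟨u, rfl⟩
  exact S.JF_nonneg n t m u

lemma JF_le_Bd (n t : ℕ) (m : S.Mem t) (u : S.U)
    (hB : ∀ t' (m' : S.Mem t'), S.Jopt n t' m' ≤ S.Bd) : S.JF (n+1) t m u ≤ S.Bd := by
  refine Real.sSup_le ?_ S.Bd_nonneg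
  rintro x ⟨ω, _, rfl⟩
  exact hB (t+1) _

lemma Jopt_le_Bd : ∀ (n t : ℕ) (m : S.Mem t), S.Jopt n t m ≤ S.Bd := by
  intro n
  induction n with
  | zero =>
    intro t m
    rw [S.Jopt_eq_sInf_JF]
    refine le_trans (csInf_le (S.bddBelow_JF 0 t m) ⟨Classical.arbitrary S.U, rfl⟩) ?_
    refine Real.sSup_le ?_ S.Bd_nonneg
    rintro x ⟨ω, _, rfl⟩
    exact S.oA_oc_le ω t m.2 _
  | succ n ih =>
    intro t m
    rw [S.Jopt_eq_sInf_JF]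
    refine le_trans (csInf_le (S.bddBelow_JF (n+1) t m) ⟨Classical.arbitrary S.U, rfl⟩) ?_
    exact S.JF_le_Bd n t m _ (fun t' m' => ih t' m')

end Sys

namespace Sys

variable (S : Sys)

lemma lower (g : S.Strat) : ∀ (n t : ℕ) (m : S.Mem t), (∃ ω₀, S.memOf g ω₀ t = m) →
    S.Jopt n t m ≤
      sSup ((fun ω => S.cA g ω (t+n) + S.γ ^ (t+n) * S.ccost g ω (t+n)) ''
        S.consistent t m) := by
  intro n
  induction n with
  | zero =>
    intro t m hw
    rw [S.Jopt_eq_sInf_JF]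
    refine le_trans (csInf_le (S.bddBelow_JF 0 t m) ⟨g t m, rfl⟩) (le_of_eq ?_)
    show sSup _ = _
    congr 1
    refine Set.image_congr (fun ω hω => ?_)
    have hmem : S.memOf g ω t = m := by
      rw [← S.consistent_eq hw] at hω
      exact hω
    rw [← S.cA_eq_oA hmem, ← S.ccost_eq_oc hmem, Nat.add_zero]
  | succ n ih =>
    intro t m hw
    rw [S.Jopt_eq_sInf_JF]
    refine le_trans (csInf_le (S.bddBelow_JF (n+1) t m) ⟨g t m, rfl⟩) ?_
    refine Real.sSup_le ?_ ?_
    · rintro x ⟨ω, hω, rfl⟩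
      have hmem : S.memOf g ω t = m := by
        rw [← S.consistent_eq hw] at hω
        exact hω
      show S.Jopt n (t+1) (S.omem ω (t+1) (Fin.snoc m.2 (g t m))) ≤ _
      rw [← S.memOf_succ_omem hmem]
      refine le_trans (ih (t+1) (S.memOf g ω (t+1)) ⟨ω, rfl⟩) ?_
      rw [show t+1+n = t+(n+1) by omega]
      refine csSup_le_csSup ⟨S.Bd, ?_⟩ ?_ ?_
      · rintro x ⟨ω', _, rfl⟩
        exact S.base_le_Bd g ω' (t+(n+1))
      · exact ⟨_, ⟨ω, S.consistent_of_memOf rfl, rfl⟩⟩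
      · rintro x ⟨ω', hω', rfl⟩
        refine ⟨ω', ?_, rfl⟩
        have hmem' : S.memOf g ω' (t+1) = S.memOf g ω (t+1) := by
          rw [← S.consistent_eq (⟨ω, rfl⟩ : ∃ ω₀, S.memOf g ω₀ (t+1) = _)] at hω'
          exact hω'
        have htr : S.memOf g ω' t = m := by
          rw [← S.mpre_memOf g ω' (by omega : t ≤ t+1), hmem', S.mpre_memOf g ω, hmem]
        exact S.consistent_of_memOf htr
    · refine Real.sSup_nonneg ?_
      rintro x ⟨ω', _, rfl⟩
      exact S.base_nonneg g ω' _

lemma Vopt_lower {g : S.Strat} {T t : ℕ} (ht : t ≤ T) {m : S.Mem t}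
    (hm : (S.consistent t m).Nonempty) (hw : ∃ ω₀, S.memOf g ω₀ t = m) :
    S.γ ^ (T+1) * S.cmin / (1 - S.γ) + S.Jopt (T - t) t m ≤ S.V g t m := by
  have hE : {ω | S.memOf g ω t = m} = S.consistent t m := S.consistent_eq hw
  have htT : t + (T - t) = T := by omega
  set c : ℝ := S.γ ^ (T+1) * S.cmin / (1 - S.γ) with hc
  have key : ∀ ω ∈ S.consistent t m,
      S.cA g ω T + S.γ ^ T * S.ccost g ω T + c ≤ S.Phi g ω t := by
    intro ω hω
    have h1 : S.Phi g ω t = S.Phi g ω (T+1) := by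
      rw [show T + 1 = t + (T + 1 - t) by omega, S.phi_shift]
    have h2 : S.Phi g ω (T+1) = S.cA g ω (T+1) + S.γ ^ (T+1) * S.cCinf g ω (T+1) := rfl
    have h3 := S.cCinf_ge g ω (T+1)
    have h4 : S.γ ^ (T+1) * (S.cmin * (1 - S.γ)⁻¹) ≤ S.γ ^ (T+1) * S.cCinf g ω (T+1) :=
      mul_le_mul_of_nonneg_left h3 (pow_nonneg S.hγ0.le _)
    have h5 : c = S.γ ^ (T+1) * (S.cmin * (1 - S.γ)⁻¹) := by
      rw [hc, div_eq_mul_inv, mul_assoc]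
    have h6 := S.cA_succ g ω T
    rw [h1, h2, h6] at *
    linarith
  have hV : S.V g t m = sSup ((fun ω => S.Phi g ω t) '' S.consistent t m) := by
    rw [Sys.V, ← hE]
    rfl
  have hJ := S.lower g (T - t) t m hw
  rw [htT] at hJ
  have hsup : sSup ((fun ω => S.cA g ω T + S.γ ^ T * S.ccost g ω T) '' S.consistent t m) + c
      ≤ S.V g t m := by
    rw [hV]
    have hne : ((fun ω => S.cA g ω T + S.γ ^ T * S.ccost g ω T) '' S.consistent t m).Nonempty :=
      hm.image _
    have h7 : sSup ((fun ω => S.cA g ω T + S.γ ^ T * S.ccost g ω T) '' S.consistent t m)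
        ≤ sSup ((fun ω => S.Phi g ω t) '' S.consistent t m) - c := by
      refine csSup_le hne ?_
      rintro x ⟨ω, hω, rfl⟩
      show S.cA g ω T + S.γ ^ T * S.ccost g ω T ≤ _
      have h8 : S.Phi g ω t ≤ sSup ((fun ω => S.Phi g ω t) '' S.consistent t m) := by
        refine le_csSup ⟨S.Bd, ?_⟩ ⟨ω, hω, rfl⟩
        rintro y ⟨ω', _, rfl⟩
        exact S.phi_le_Bd g ω' t
      have h9 := key ω hω
      linarith
    linarith
  linarith [hJ, hsup]

end Sys

namespace Sys

variable (S : Sys)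

lemma exists_eps_choice (f : S.U → ℝ) {ε : ℝ} (hε : 0 < ε) :
    ∃ u, f u ≤ sInf (Set.range f) + ε := by
  obtain ⟨a, ⟨u, rfl⟩, ha⟩ := Real.lt_sInf_add_pos (Set.range_nonempty f) hε
  exact ⟨u, ha.le⟩

lemma V_nonneg (g : S.Strat) (t : ℕ) (m : S.Mem t) : 0 ≤ S.V g t m := by
  refine Real.sSup_nonneg ?_
  rintro x ⟨ω, _, rfl⟩
  exact S.phi_nonneg g ω t

lemma Vopt_upper {T t : ℕ} (ht : t ≤ T) {m : S.Mem t} (hm : (S.consistent t m).Nonempty)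
    {ε : ℝ} (hε : 0 < ε) :
    S.Vopt t m ≤ S.Jopt (T - t) t m + S.γ ^ (T+1) * S.cmax / (1 - S.γ)
      + ((T - t : ℕ) + 1) * ε := by
  classical
  have hch : ∀ (n s : ℕ) (m' : S.Mem s), ∃ u, S.JF n s m' u ≤ S.Jopt n s m' + ε := by
    intro n s m'
    rw [S.Jopt_eq_sInf_JF]
    exact S.exists_eps_choice _ hε
  choose ch hch using hch
  set g : S.Strat := fun s m' => if h : s < t then m.2 ⟨s, h⟩ else ch (T - s) s m' with hg
  have hglt : ∀ s (hs : s < t) (m' : S.Mem s), g s m' = m.2 ⟨s, hs⟩ := by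
    intro s hs m'
    rw [hg]
    simp [hs]
  have hgge : ∀ s (hs : ¬ s < t) (m' : S.Mem s), g s m' = ch (T - s) s m' := by
    intro s hs m'
    rw [hg]
    simp [hs]
  obtain ⟨ω₀, hω₀⟩ := hm
  have h₀ : S.memOf g ω₀ t = m := S.follow (fun s hs => hglt s hs _) hω₀
  set tail : ℝ := S.γ ^ (T+1) * S.cmax / (1 - S.γ) with htail
  have htail' : tail = S.γ ^ (T+1) * (S.cmax * (1 - S.γ)⁻¹) := by
    rw [htail, div_eq_mul_inv, mul_assoc]
  have Q : ∀ (n s : ℕ) (m' : S.Mem s), t ≤ s → s + n = T → (∃ ω₁, S.memOf g ω₁ s = m') →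
      sSup ((fun ω => S.Phi g ω s) '' {ω | S.memOf g ω s = m'}) ≤
        S.Jopt n s m' + tail + (n + 1 : ℕ) * ε := by
    intro n
    induction n with
    | zero =>
      intro s m' hts hsT hw
      have hsT' : s = T := by omega
      obtain ⟨ω₁, hω₁⟩ := hw
      have hgT : g s m' = ch 0 s m' := by
        rw [hgge s (by omega) m', show T - s = 0 by omega]
      refine csSup_le ⟨_, ⟨ω₁, hω₁, rfl⟩⟩ ?_
      rintro x ⟨ω, hω, rfl⟩
      have hmem : S.memOf g ω s = m' := hω
      show S.Phi g ω s ≤ _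
      have h1 : S.Phi g ω s = S.cA g ω (s+1) + S.γ ^ (s+1) * S.cCinf g ω (s+1) :=
        (S.phi_succ g ω s).symm
      have h2 : S.γ ^ (s+1) * S.cCinf g ω (s+1) ≤ S.γ ^ (s+1) * (S.cmax * (1-S.γ)⁻¹) :=
        mul_le_mul_of_nonneg_left (S.cCinf_le g ω (s+1)) (pow_nonneg S.hγ0.le _)
      have h2' : S.γ ^ (s+1) * (S.cmax * (1-S.γ)⁻¹) = S.γ ^ (T+1) * (S.cmax * (1-S.γ)⁻¹) := by
        rw [hsT']
      have h3 : S.cA g ω (s+1) =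
          S.oA ω s m'.2 + S.γ ^ s * S.oc ω s (Fin.snoc m'.2 (g s m')) := by
        rw [S.cA_succ, S.cA_eq_oA hmem, S.ccost_eq_oc hmem]
      have h4 : S.oA ω s m'.2 + S.γ ^ s * S.oc ω s (Fin.snoc m'.2 (g s m')) ≤
          S.JF 0 s m' (g s m') := by
        refine le_csSup ⟨S.Bd, ?_⟩ ⟨ω, S.consistent_of_memOf hmem, rfl⟩
        rintro y ⟨ω', _, rfl⟩
        exact S.oA_oc_le ω' s m'.2 _
      have h5 : S.JF 0 s m' (g s m') ≤ S.Jopt 0 s m' + ε := by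
        rw [hgT]
        exact hch 0 s m'
      rw [h1]
      push_cast
      linarith
    | succ n ih =>
      intro s m' hts hsT hw
      obtain ⟨ω₁, hω₁⟩ := hw
      have hgs : g s m' = ch (T - s) s m' := hgge s (by omega) m'
      have hTs : T - s = n + 1 := by omega
      refine csSup_le ⟨_, ⟨ω₁, hω₁, rfl⟩⟩ ?_
      rintro x ⟨ω, hω, rfl⟩
      have hmem : S.memOf g ω s = m' := hω
      show S.Phi g ω s ≤ _
      have h1 : S.Phi g ω s = S.Phi g ω (s+1) := (S.phi_succ g ω s).symm
      have h2 : S.Phi g ω (s+1) ≤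
          sSup ((fun ω' => S.Phi g ω' (s+1)) ''
            {ω' | S.memOf g ω' (s+1) = S.memOf g ω (s+1)}) := by
        refine le_csSup ⟨S.Bd, ?_⟩ ⟨ω, rfl, rfl⟩
        rintro y ⟨ω', _, rfl⟩
        exact S.phi_le_Bd g ω' (s+1)
      have h3 := ih (s+1) (S.memOf g ω (s+1)) (by omega) (by omega) ⟨ω, rfl⟩
      have h4 : S.Jopt n (s+1) (S.memOf g ω (s+1)) ≤ S.JF (n+1) s m' (g s m') := by
        rw [S.memOf_succ_omem hmem]
        refine le_csSup ⟨S.Bd, ?_⟩ ⟨ω, S.consistent_of_memOf hmem, rfl⟩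
        rintro y ⟨ω', _, rfl⟩
        exact S.Jopt_le_Bd n (s+1) _
      have h5 : S.JF (n+1) s m' (g s m') ≤ S.Jopt (n+1) s m' + ε := by
        rw [hgs, hTs]
        exact hch (n+1) s m'
      rw [h1]
      push_cast
      push_cast at h3
      linarith
  have hQ := Q (T - t) t m le_rfl (by omega) ⟨ω₀, h₀⟩
  have hVle : S.Vopt t m ≤ S.V g t m := by
    refine csInf_le ⟨0, ?_⟩ ⟨g, ⟨ω₀, h₀⟩, rfl⟩
    rintro b ⟨g', _, rfl⟩
    exact S.V_nonneg g' t m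
  have hVeq : S.V g t m = sSup ((fun ω => S.Phi g ω t) '' {ω | S.memOf g ω t = m}) := rfl
  rw [hVeq] at hVle
  push_cast at hQ ⊢
  linarith

end Sys

theorem stmt2 (S : Sys) (T t : ℕ) (ht : t ≤ T) (m : S.Mem t)
    (hm : (S.consistent t m).Nonempty) :
    S.γ ^ (T+1) * S.cmin / (1 - S.γ) + S.Jopt (T - t) t m ≤ S.Vopt t m ∧
      S.Vopt t m ≤ S.Jopt (T - t) t m + S.γ ^ (T+1) * S.cmax / (1 - S.γ) := by
  classical
  constructor
  · refine le_csInf ?_ ?_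
    · set g₀ : S.Strat := fun s m' => if h : s < t then m.2 ⟨s, h⟩ else
        Classical.arbitrary S.U with hg₀
      obtain ⟨ω₀, hω₀⟩ := hm
      have h₀ : S.memOf g₀ ω₀ t = m :=
        S.follow (fun s hs => by rw [hg₀]; simp [hs]) hω₀
      exact ⟨S.V g₀ t m, ⟨g₀, ⟨ω₀, h₀⟩, rfl⟩⟩
    · rintro b ⟨g, hg, rfl⟩
      exact S.Vopt_lower ht hm hg
  · refine le_of_forall_pos_le_add ?_
    intro ε hε
    have hd : (0:ℝ) < ((T - t : ℕ) : ℝ) + 1 := by positivity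
    have h := S.Vopt_upper ht hm (ε := ε / (((T - t : ℕ) : ℝ) + 1)) (by positivity)
    have h2 : (((T - t : ℕ) : ℝ) + 1) * (ε / (((T - t : ℕ) : ℝ) + 1)) = ε := by
      rw [mul_comm]
      exact div_mul_cancel₀ ε (ne_of_gt hd)
    rw [h2] at h
    linarith
end
end
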